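/- (Lemma 6.2, closure property for three fixed points.) Under the three-vertex hypotheses, for all β ∈ β̂, γ ∈ γ̂ and δ ∈ δ̂ one has β + γ ∈ δ̂, γ + δ ∈ β̂, and β + δ ∈ γ̂. -/

import Mathlib

/-!
Over `𝔽₂` the line `span {ρ}` is `{0, ρ}`, so two vectors are congruent mod `ρ` exactly when
they are equal or differ by `ρ`. Cancelling the common block (`β̂` in `A_p ≡ A_q mod β`, etc.)
leaves a congruence between two disjoint blocks, so each `γ ∈ γ̂` must be matched in `δ̂` by
`β + γ`; the other two memberships follow in the same way.
-/

/-- Two multisets of vectors of `V` are *congruent mod `ρ`* if their images under the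
quotient map `V → V ⧸ span {ρ}` are equal as multisets. -/
def CongMod {V : Type*} [AddCommGroup V] [Module (ZMod 2) V] (ρ : V)
    (A B : Multiset V) : Prop :=
  A.map ⇑(Submodule.span (ZMod 2) {ρ}).mkQ = B.map ⇑(Submodule.span (ZMod 2) {ρ}).mkQ

open Submodule

section CongMod

variable {V : Type*} [AddCommGroup V] [Module (ZMod 2) V]

theorem Submodule.mem_span_singleton_zmod_two {ρ v : V} :
    v ∈ span (ZMod 2) {ρ} ↔ v = 0 ∨ v = ρ := by
  rw [mem_span_singleton]
  constructor
  · rintro ⟨a, rfl⟩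
    rcases (by decide : ∀ b : ZMod 2, b = 0 ∨ b = 1) a with rfl | rfl
    exacts [.inl (zero_smul _ _), .inr (one_smul _ _)]
  · rintro (rfl | rfl)
    exacts [⟨0, zero_smul _ _⟩, ⟨1, one_smul _ _⟩]

theorem Submodule.mkQ_span_singleton_zmod_two_eq_iff {ρ x y : V} :
    (span (ZMod 2) {ρ}).mkQ x = (span (ZMod 2) {ρ}).mkQ y ↔ x = y ∨ x = ρ + y := by
  rw [mkQ_apply, mkQ_apply, Quotient.eq, mem_span_singleton_zmod_two, sub_eq_zero,
    sub_eq_iff_eq_add]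

theorem CongMod.symm {ρ : V} {A B : Multiset V} (h : CongMod ρ A B) : CongMod ρ B A :=
  Eq.symm h

theorem CongMod.of_add_left {ρ : V} {A B C : Multiset V} (h : CongMod ρ (A + B) (A + C)) :
    CongMod ρ B C := by
  unfold CongMod at h ⊢
  rw [Multiset.map_add, Multiset.map_add] at h
  exact add_left_cancel h

theorem CongMod.of_add_right {ρ : V} {A B C : Multiset V} (h : CongMod ρ (B + A) (C + A)) :
    CongMod ρ B C := by
  rw [add_comm B, add_comm C] at h
  exact h.of_add_left

theorem CongMod.add_mem_of_notMem {ρ γ : V} {C D : Multiset V} (h : CongMod ρ C D)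
    (hγC : γ ∈ C) (hγD : γ ∉ D) : ρ + γ ∈ D := by
  obtain ⟨d, hdD, hdγ⟩ := Multiset.mem_map.mp (h ▸ Multiset.mem_map_of_mem _ hγC :
    (span (ZMod 2) {ρ}).mkQ γ ∈ D.map (span (ZMod 2) {ρ}).mkQ)
  rcases mkQ_span_singleton_zmod_two_eq_iff.mp hdγ with rfl | rfl
  exacts [absurd hdD hγD, hdD]

end CongMod

theorem three_fixed_points_closure
    {V : Type*} [AddCommGroup V] [Module (ZMod 2) V]
    (B C D : Multiset V)
    (hBC : ∀ v, v ∈ B → v ∈ C → False) (hBD : ∀ v, v ∈ B → v ∈ D → False)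
    (hCD : ∀ v, v ∈ C → v ∈ D → False)
    (Ap Aq Ar : Multiset V)
    (hAp : Ap = B + C) (hAq : Aq = B + D) (hAr : Ar = D + C)
    (hP2B : ∀ β ∈ B, CongMod β Ap Aq)
    (hP2C : ∀ γ ∈ C, CongMod γ Ap Ar)
    (hP2D : ∀ δ ∈ D, CongMod δ Aq Ar) :
    ∀ β ∈ B, ∀ γ ∈ C, ∀ δ ∈ D, β + γ ∈ D ∧ γ + δ ∈ B ∧ β + δ ∈ C := by
  subst hAp hAq hAr
  intro β hβ γ hγ δ hδ
  have hCD_mod_β : CongMod β C D := (hP2B β hβ).of_add_left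
  have hDB_mod_γ : CongMod γ D B := (hP2C γ hγ).of_add_right.symm
  have hBC_mod_δ : CongMod δ B C := by
    rw [add_comm B D] at hP2D
    exact (hP2D δ hδ).of_add_left
  refine ⟨hCD_mod_β.add_mem_of_notMem hγ (hCD γ hγ),
    hDB_mod_γ.add_mem_of_notMem hδ (hBD δ · hδ), ?_⟩
  rw [add_comm]
  exact hBC_mod_δ.add_mem_of_notMem hβ (hBC β hβ)
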